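/- arXiv:2601.13152 — 2 statements merged into one kernel-verified Lean document; each statement's English description precedes it below -/
import Mathlib

section
/- For every natural number n ≥ 1, the product ∏_{i=1}^n (4i - 3) = 1 · 5 · 9 · ... · (4n-3) is not a perfect square for n ≥ 2, and more precisely ∏_{i=1}^n (4i+1) is never a perfect square. -/
/-- A partition as a weakly decreasing list of positive naturals. -/
def IsPartition (l : List ℕ) : Prop :=
  l.Pairwise (· ≥ ·) ∧ ∀ x ∈ l, 0 < x

/-- Membership of the (1-based) cell `(i, j)` in the Young diagram of `l`. -/
def cellMem (l : List ℕ) (i j : ℕ) : Prop :=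
  1 ≤ i ∧ i ≤ l.length ∧ 1 ≤ j ∧ j ≤ l.getD (i - 1) 0

/-- The `j`-th part of the conjugate partition: `λ'_j = |{i : λ_i ≥ j}|`. -/
def conjPart (l : List ℕ) (j : ℕ) : ℕ :=
  (l.filter (fun a => j ≤ a)).length

/-- The conjugate partition as a list. -/
def conjList (l : List ℕ) : List ℕ :=
  (List.range (l.headD 0)).map (fun i => conjPart l (i + 1))

/-- Hook length `h_{i,j}(λ) = (λ_i - j) + (λ'_j - i) + 1` (1-based coordinates). -/
def hookLength (l : List ℕ) (i j : ℕ) : ℕ :=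
  (l.getD (i - 1) 0 - j) + (conjPart l j - i) + 1

/-- `λ` has a hook of size `h`. -/
def HasHook (l : List ℕ) (h : ℕ) : Prop :=
  ∃ i j, cellMem l i j ∧ hookLength l i j = h

/-- The hook `H_{i,j}(λ)` as a set of cells. -/
def hookSet (l : List ℕ) (i j : ℕ) : Set (ℕ × ℕ) :=
  {q | (q.1 = i ∧ cellMem l i q.2 ∧ j ≤ q.2) ∨ (q.2 = j ∧ cellMem l q.1 j ∧ i ≤ q.1)}

/-- The rim hook `R_{i,j}(λ)` as a set of cells. -/
def rimSet (l : List ℕ) (i j : ℕ) : Set (ℕ × ℕ) :=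
  {q | ∃ x y t : ℕ, (x, y) ∈ hookSet l i j ∧ cellMem l (x + t) (y + t) ∧
      ¬ cellMem l (x + t + 1) (y + t + 1) ∧ q = (x + t, y + t)}

/-- `l'` is obtained from `l` by removing a rim hook of size `e`. -/
def RemovesHook (e : ℕ) (l l' : List ℕ) : Prop :=
  IsPartition l' ∧ ∃ i j, cellMem l i j ∧ hookLength l i j = e ∧
    ∀ a b, cellMem l' a b ↔ (cellMem l a b ∧ (a, b) ∉ rimSet l i j)

/-- `m` is the `e`-core of `l`: obtained by repeatedly removing `e`-hooks until none remain. -/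
def IsECore (e : ℕ) (l m : List ℕ) : Prop :=
  IsPartition m ∧ Relation.ReflTransGen (RemovesHook e) l m ∧ ¬ HasHook m e

/-- The staircase partition `γ_c = (c, c-1, ..., 1)`. -/
def staircase (c : ℕ) : List ℕ := (List.range c).reverse.map (· + 1)

/-- The sequence `(x_1 - (t-1), x_2 - (t-2), ..., x_t)` associated to a β-set `X`,
with `x_1 > x_2 > ... > x_t` the elements of `X` in decreasing order. -/
def betaList (X : Finset ℕ) : List ℕ :=
  ((X.sort (· ≤ ·)).reverse).mapIdx (fun k x => x - (X.card - 1 - k))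

/-- The partition `P(X)` associated to a β-set `X` (dropping the zero parts). -/
def betaPartition (X : Finset ℕ) : List ℕ := (betaList X).filter (fun a => a ≠ 0)

/-!
Let `x = 4n + 1`. A prime `p` with `3p ≤ x < 5p` has exactly two odd multiples `p, 3p` up to `x`,
exactly one of which is `≡ 1 mod 4`, and `p² > x`; so `p` divides exactly one factor `4j + 1`
of `∏ (4i + 1)`, exactly once, and the product is not a square (for `x < 15` take `p = 5`).

Such a prime exists for every `x ≥ 15`. Small `x` are covered by a chain of primes, large `x` by
Chebyshev's method: `Q_K = (30K)! K! / ((15K)! (10K)! (6K)!)` is an integer at least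
`2^(39(K-1)) / K^30`, and it divides `lcm(1, …, 30K)`, since `⌊m/2⌋ + ⌊m/3⌋ + ⌊m/5⌋` lies
between `m + ⌊m/30⌋ - 1` and `m + ⌊m/30⌋`. For `K = ⌊x/90⌋`, if no prime lay in `(x/5, x/3]`, all
primes up to `30K` would be at most `x/5 ≤ 18K + 17`, and then
`lcm(1, …, 30K) ≤ (30K)^√(30K) · 4^(18K+17)`, which is too small.
-/

open Nat Finset

theorem not_exists_sq_prod_of_unique_prime_dvd {ι : Type*} [DecidableEq ι] {s : Finset ι}
    {f : ι → ℕ} {p : ℕ} (hp : p.Prime) {j : ι} (hj : j ∈ s) (hpj : p ∣ f j)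
    (hpj2 : ¬p ^ 2 ∣ f j) (hunique : ∀ i ∈ s, p ∣ f i → i = j) :
    ¬∃ m, ∏ i ∈ s, f i = m ^ 2 := by
  rintro ⟨m, hm⟩
  have hpm : p ∣ m := hp.dvd_of_dvd_pow (hm ▸ hpj.trans (dvd_prod_of_mem f hj))
  have hcop : Nat.Coprime (p ^ 2) (∏ i ∈ s.erase j, f i) :=
    Nat.Coprime.pow_left 2 <| Nat.Coprime.prod_right fun i hi =>
      (hp.coprime_iff_not_dvd).2 fun hpi =>
        ne_of_mem_erase hi (hunique i (mem_of_mem_erase hi) hpi)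
  refine hpj2 (hcop.dvd_of_dvd_mul_right ?_)
  rw [mul_prod_erase s f hj, hm]
  exact pow_dvd_pow_of_dvd hpm 2

theorem eq_of_dvd_four_mul_add_one {p n i j : ℕ} (hn : 4 * n + 1 < 5 * p) (hi : i ≤ n)
    (hj : j ≤ n) (hpi : p ∣ 4 * i + 1) (hpj : p ∣ 4 * j + 1) : i = j := by
  obtain ⟨a, ha⟩ := hpi
  obtain ⟨b, hb⟩ := hpj
  have ha5 : a < 5 := Nat.lt_of_mul_lt_mul_left (a := p) (by omega)
  have hb5 : b < 5 := Nat.lt_of_mul_lt_mul_left (a := p) (by omega)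
  interval_cases a <;> interval_cases b <;> omega

theorem not_exists_sq_prod_four_mul_add_one_of_prime {n p j : ℕ} (hp : p.Prime) (hp5 : 5 ≤ p)
    (hn : 4 * n + 1 < 5 * p) (hj : j ∈ Icc 1 n) (hpj : p ∣ 4 * j + 1) :
    ¬∃ m, ∏ i ∈ Icc 1 n, (4 * i + 1) = m ^ 2 := by
  refine not_exists_sq_prod_of_unique_prime_dvd hp hj hpj (fun h => ?_) fun i hi hpi =>
    eq_of_dvd_four_mul_add_one hn (mem_Icc.1 hi).2 (mem_Icc.1 hj).2 hpi hpj
  have := Nat.le_of_dvd (by omega) h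
  have := (mem_Icc.1 hj).2
  nlinarith

section Chebyshev

open Chebyshev

theorem chebyshev_floor_bounds (K q : ℕ) :
    15 * K / q + 10 * K / q + 6 * K / q ≤ 30 * K / q + K / q ∧
      30 * K / q + K / q ≤ 15 * K / q + 10 * K / q + 6 * K / q + 1 := by
  -- every quotient is `m / d` for `m = 30 * K / q`, which turns the claim into one about `m % 30`
  have hdiv (c a : ℕ) (hc : 0 < c) : c * a / q / c = a / q := by
    rw [Nat.div_div_eq_div_mul, Nat.mul_comm q, Nat.mul_div_mul_left _ _ hc]
  have h2 := hdiv 2 (15 * K) two_pos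
  have h3 := hdiv 3 (10 * K) three_pos
  have h5 := hdiv 5 (6 * K) (by norm_num)
  have h30 := hdiv 30 K (by norm_num)
  simp only [← Nat.mul_assoc, Nat.reduceMul] at h2 h3 h5
  omega

theorem factorization_chebyshev_bounds (K : ℕ) {p : ℕ} (hp : p.Prime) :
    ((15 * K)! * (10 * K)! * (6 * K)!).factorization p ≤ ((30 * K)! * K !).factorization p ∧
      ((30 * K)! * K !).factorization p ≤
        ((15 * K)! * (10 * K)! * (6 * K)!).factorization p + p.log (30 * K) := by
  have legendre (c : ℕ) (hc : c ≤ 30) :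
      (c * K)!.factorization p = ∑ i ∈ Ico 1 (p.log (30 * K) + 1), c * K / p ^ i :=
    factorization_factorial hp <| Nat.lt_succ_of_le <| Nat.log_mono_right <|
      Nat.mul_le_mul_right K hc
  have hK := legendre 1 (by norm_num)
  rw [Nat.one_mul] at hK
  simp only [Nat.factorization_mul, Nat.factorial_ne_zero, Nat.mul_ne_zero_iff, ne_eq,
    not_false_eq_true, and_self, Finsupp.add_apply]
  rw [legendre 30 le_rfl, legendre 15 (by norm_num), legendre 10 (by norm_num),
    legendre 6 (by norm_num), hK, ← sum_add_distrib, ← sum_add_distrib, ← sum_add_distrib]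
  refine ⟨sum_le_sum fun i _ => (chebyshev_floor_bounds K _).1, ?_⟩
  calc _ ≤ ∑ i ∈ Ico 1 (p.log (30 * K) + 1),
          (15 * K / p ^ i + 10 * K / p ^ i + 6 * K / p ^ i + 1) :=
        sum_le_sum fun i _ => (chebyshev_floor_bounds K _).2
    _ = _ := by simp [sum_add_distrib]

theorem factorial_mul_factorial_mul_factorial_dvd (K : ℕ) :
    (15 * K)! * (10 * K)! * (6 * K)! ∣ (30 * K)! * K ! :=
  (factorization_prime_le_iff_dvd (by positivity) (by positivity)).1
    fun _ hp => (factorization_chebyshev_bounds K hp).1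

def chebyshevQuot (K : ℕ) : ℕ := (30 * K)! * K ! / ((15 * K)! * (10 * K)! * (6 * K)!)

theorem chebyshevQuot_mul (K : ℕ) :
    chebyshevQuot K * ((15 * K)! * (10 * K)! * (6 * K)!) = (30 * K)! * K ! :=
  Nat.div_mul_cancel (factorial_mul_factorial_mul_factorial_dvd K)

theorem chebyshevQuot_pos (K : ℕ) : 0 < chebyshevQuot K := by
  refine Nat.pos_of_ne_zero fun h => ?_
  have := chebyshevQuot_mul K
  rw [h, Nat.zero_mul] at this
  exact (by positivity : (30 * K)! * K ! ≠ 0) this.symm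

theorem chebyshevQuot_dvd_lcmUpto (K : ℕ) : chebyshevQuot K ∣ lcmUpto (30 * K) := by
  refine (factorization_prime_le_iff_dvd (chebyshevQuot_pos K).ne' (lcmUpto_ne_zero _)).1
    fun p hp => ?_
  rw [factorization_lcmUpto _ hp, chebyshevQuot,
    Nat.factorization_div (factorial_mul_factorial_mul_factorial_dvd K)]
  have := (factorization_chebyshev_bounds K hp).2
  simp only [Finsupp.coe_tsub, Pi.sub_apply]
  omega

theorem factorial_add_le_factorial_mul_pow (a m : ℕ) : (a + m)! ≤ a ! * (a + m) ^ m :=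
  factorial_mul_ascFactorial a m ▸ Nat.mul_le_mul_left _ (ascFactorial_le_pow_add a m)

theorem two_pow_mul_chebyshevQuot_le_succ (K : ℕ) :
    2 ^ 39 * (chebyshevQuot K * K ^ 30) ≤ chebyshevQuot (K + 1) * (K + 1) ^ 30 := by
  have hpos : 0 < 15 ^ 15 * 10 ^ 10 * 6 ^ 6 * (K + 1) * ((15 * K)! * (10 * K)! * (6 * K)!) := by
    positivity
  have hnum : (30 * K + 1) ^ 30 * (K + 1) * ((30 * K)! * K !) ≤ (30 * (K + 1))! * (K + 1)! :=
    calc _ = ((30 * K)! * (30 * K + 1) ^ 30) * ((K + 1) * K !) := by ring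
      _ ≤ (30 * K + 30)! * (K + 1)! := Nat.mul_le_mul_right _ factorial_mul_pow_le_factorial
      _ = _ := by ring_nf
  have hfac (c : ℕ) : (c * (K + 1))! ≤ (c * K)! * (c ^ c * (K + 1) ^ c) := by
    rw [← Nat.mul_pow, Nat.mul_add_one]
    exact factorial_add_le_factorial_mul_pow (c * K) c
  have hden : (15 * (K + 1))! * (10 * (K + 1))! * (6 * (K + 1))! ≤
      15 ^ 15 * 10 ^ 10 * 6 ^ 6 * (K + 1) ^ 31 * ((15 * K)! * (10 * K)! * (6 * K)!) :=
    calc _ ≤ (15 * K)! * (15 ^ 15 * (K + 1) ^ 15) * ((10 * K)! * (10 ^ 10 * (K + 1) ^ 10)) *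
          ((6 * K)! * (6 ^ 6 * (K + 1) ^ 6)) :=
          Nat.mul_le_mul (Nat.mul_le_mul (hfac 15) (hfac 10)) (hfac 6)
      _ = _ := by ring
  have hconst : 2 ^ 39 * (15 ^ 15 * 10 ^ 10 * 6 ^ 6) * K ^ 30 ≤ (30 * K + 1) ^ 30 :=
    -- `30 ^ 30 / (15 ^ 15 * 10 ^ 10 * 6 ^ 6) = 2 ^ 14 * 3 ^ 9 * 5 ^ 5 ≈ 2 ^ 39.9`
    have h : 2 ^ 39 * (15 ^ 15 * 10 ^ 10 * 6 ^ 6) ≤ 30 ^ 30 := by norm_num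
    calc _ ≤ 30 ^ 30 * K ^ 30 := Nat.mul_le_mul_right _ h
      _ = (30 * K) ^ 30 := (Nat.mul_pow _ _ _).symm
      _ ≤ _ := Nat.pow_le_pow_left (Nat.le_succ _) _
  refine Nat.le_of_mul_le_mul_right
    (c := 15 ^ 15 * 10 ^ 10 * 6 ^ 6 * (K + 1) * ((15 * K)! * (10 * K)! * (6 * K)!)) ?_ hpos
  calc _ = 2 ^ 39 * (15 ^ 15 * 10 ^ 10 * 6 ^ 6) * K ^ 30 * (K + 1) *
        (chebyshevQuot K * ((15 * K)! * (10 * K)! * (6 * K)!)) := by ring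
    _ ≤ (30 * K + 1) ^ 30 * (K + 1) * ((30 * K)! * K !) := by
        rw [chebyshevQuot_mul]
        exact Nat.mul_le_mul_right _ (Nat.mul_le_mul_right _ hconst)
    _ ≤ chebyshevQuot (K + 1) * ((15 * (K + 1))! * (10 * (K + 1))! * (6 * (K + 1))!) :=
        hnum.trans_eq (chebyshevQuot_mul (K + 1)).symm
    _ ≤ chebyshevQuot (K + 1) *
          (15 ^ 15 * 10 ^ 10 * 6 ^ 6 * (K + 1) ^ 31 * ((15 * K)! * (10 * K)! * (6 * K)!)) :=
        Nat.mul_le_mul_left _ hden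
    _ = _ := by ring

theorem two_pow_le_chebyshevQuot_mul_pow {K : ℕ} (hK : 1 ≤ K) :
    2 ^ (39 * (K - 1)) ≤ chebyshevQuot K * K ^ 30 := by
  induction K, hK using Nat.le_induction with
  | base => simpa [Nat.one_le_iff_ne_zero] using (chebyshevQuot_pos 1).ne'
  | succ K hK ih =>
    calc 2 ^ (39 * (K + 1 - 1)) = 2 ^ 39 * 2 ^ (39 * (K - 1)) := by
          rw [← pow_add]; congr 1; omega
      _ ≤ 2 ^ 39 * (chebyshevQuot K * K ^ 30) := Nat.mul_le_mul_left _ ih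
      _ ≤ _ := two_pow_mul_chebyshevQuot_le_succ K

theorem lcmUpto_le_pow_sqrt_mul_primorial {n m : ℕ} (h : ∀ p ∈ primesLE n, p ≤ m) :
    lcmUpto n ≤ n ^ n.sqrt * primorial m := by
  rcases Nat.eq_zero_or_pos n with rfl | hn
  · simpa [lcmUpto, Nat.one_le_iff_ne_zero] using primorial_ne_zero m
  rw [lcmUpto_eq_prod_pow_log, ← prod_filter_mul_prod_filter_not (primesLE n) (· ≤ n.sqrt)]
  refine Nat.mul_le_mul ?_ ?_
  · have hcard : #{p ∈ primesLE n | p ≤ n.sqrt} ≤ n.sqrt :=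
      calc _ ≤ #(Icc 1 n.sqrt) := card_le_card fun p hp => by
            simp only [mem_filter] at hp
            exact mem_Icc.2 ⟨(prime_of_mem_primesLE hp.1).one_le, hp.2⟩
        _ = n.sqrt := by simp
    calc _ ≤ ∏ _p ∈ {p ∈ primesLE n | p ≤ n.sqrt}, n :=
          prod_le_prod' fun p _ => Nat.pow_log_le_self p hn.ne'
      _ ≤ n ^ n.sqrt := (prod_const n).trans_le (Nat.pow_le_pow_right hn hcard)
  · calc _ ≤ ∏ p ∈ primesLE n with ¬p ≤ n.sqrt, p := prod_le_prod' fun p hp => by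
          simp only [mem_filter, not_le, sqrt_lt'] at hp
          have hp1 := (prime_of_mem_primesLE hp.1).one_lt
          have hlog : p.log n < 2 := (log_lt_iff_lt_pow hp1 hn.ne').2 hp.2
          exact (Nat.pow_le_pow_right hp1.le (by omega)).trans_eq (pow_one p)
      _ ≤ primorial m := prod_le_prod_of_subset_of_one_le' (fun p hp => by
            simp only [mem_filter] at hp
            exact mem_primesLE.2 ⟨h p hp.1, prime_of_mem_primesLE hp.1⟩)
          fun p hp _ => (prime_of_mem_primesLE hp).one_le

theorem thirty_mul_sq_le_four_mul_two_pow {L : ℕ} (hL : 12 ≤ L) :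
    30 * (L + 6) ^ 2 ≤ 4 * 2 ^ L := by
  induction L, hL using Nat.le_induction with
  | base => norm_num
  | succ L _ ih => rw [pow_succ 2 L]; nlinarith

theorem pow_sqrt_mul_four_pow_mul_pow_lt {K : ℕ} (hK : 2 ^ 12 ≤ K) :
    (30 * K) ^ (30 * K).sqrt * 4 ^ (18 * K + 17) * K ^ 30 < 2 ^ (39 * (K - 1)) := by
  set L := Nat.log 2 K
  set s := (30 * K).sqrt
  have hK0 : K ≠ 0 := by omega
  have hLK : 2 ^ L ≤ K := Nat.pow_log_le_self 2 hK0
  have hKL : K < 2 ^ (L + 1) := Nat.lt_pow_succ_log_self one_lt_two K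
  have hL : 12 ≤ L := (Nat.le_log_iff_pow_le one_lt_two hK0).2 hK
  have hsq := thirty_mul_sq_le_four_mul_two_pow hL
  have hLs : (L + 6) * s ≤ 2 * K := by
    rw [← Nat.mul_self_le_mul_self_iff]
    calc (L + 6) * s * ((L + 6) * s) = (L + 6) ^ 2 * s ^ 2 := by ring
      _ ≤ (L + 6) ^ 2 * (30 * K) := Nat.mul_le_mul_left _ (Nat.sqrt_le' _)
      _ ≤ 2 * K * (2 * K) := by nlinarith
  have hLK' : 30 * L + 103 < K := by nlinarith
  have h1 : (30 * K) ^ s ≤ 2 ^ ((L + 6) * s) := by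
    rw [pow_mul]
    exact Nat.pow_le_pow_left (by rw [pow_add]; omega) s
  have h2 : (4 : ℕ) ^ (18 * K + 17) = 2 ^ (2 * (18 * K + 17)) := by rw [pow_mul]; norm_num
  have h3 : K ^ 30 ≤ 2 ^ ((L + 1) * 30) := by
    rw [pow_mul]
    exact Nat.pow_le_pow_left hKL.le 30
  calc _ ≤ 2 ^ ((L + 6) * s) * 2 ^ (2 * (18 * K + 17)) * 2 ^ ((L + 1) * 30) :=
        Nat.mul_le_mul (Nat.mul_le_mul h1 h2.le) h3
    _ = 2 ^ ((L + 6) * s + 2 * (18 * K + 17) + (L + 1) * 30) := by rw [← pow_add, ← pow_add]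
    _ < 2 ^ (39 * (K - 1)) := Nat.pow_lt_pow_right one_lt_two (by omega)

theorem exists_prime_three_mul_le_lt_five_mul_eventually {x : ℕ} (hx : 90 * 2 ^ 12 ≤ x) :
    ∃ p, p.Prime ∧ 3 * p ≤ x ∧ x < 5 * p := by
  by_contra! h
  set K := x / 90
  have hprimes : ∀ p ∈ primesLE (30 * K), p ≤ x / 5 := fun p hp => by
    have := h p (prime_of_mem_primesLE hp) (by have := le_of_mem_primesLE hp; omega)
    omega
  have hbound :=
    calc 2 ^ (39 * (K - 1)) ≤ chebyshevQuot K * K ^ 30 :=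
          two_pow_le_chebyshevQuot_mul_pow (by omega)
      _ ≤ lcmUpto (30 * K) * K ^ 30 :=
          Nat.mul_le_mul_right _ (Nat.le_of_dvd (lcmUpto_pos _) (chebyshevQuot_dvd_lcmUpto K))
      _ ≤ (30 * K) ^ (30 * K).sqrt * primorial (x / 5) * K ^ 30 :=
          Nat.mul_le_mul_right _ (lcmUpto_le_pow_sqrt_mul_primorial hprimes)
      _ ≤ (30 * K) ^ (30 * K).sqrt * 4 ^ (18 * K + 17) * K ^ 30 := by
          gcongr
          exact (primorial_le_four_pow _).trans (Nat.pow_le_pow_right (by norm_num) (by omega))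
  exact (pow_sqrt_mul_four_pow_mul_pow_lt (by omega)).not_ge hbound

end Chebyshev

theorem exists_prime_three_mul_le_lt_five_mul_of_lt_five_mul {x : ℕ} (p : ℕ) (hp : p.Prime)
    (hx : x < 5 * p) (h : x < 3 * p → ∃ q, q.Prime ∧ 3 * q ≤ x ∧ x < 5 * q) :
    ∃ q, q.Prime ∧ 3 * q ≤ x ∧ x < 5 * q :=
  (lt_or_ge x (3 * p)).elim h fun h3 => ⟨p, hp, h3, hx⟩

theorem exists_prime_three_mul_le_lt_five_mul {x : ℕ} (hx : 15 ≤ x) :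
    ∃ p, p.Prime ∧ 3 * p ≤ x ∧ x < 5 * p := by
  rcases le_or_gt (90 * 2 ^ 12) x with hx' | hx'
  · exact exists_prime_three_mul_le_lt_five_mul_eventually hx'
  have step := @exists_prime_three_mul_le_lt_five_mul_of_lt_five_mul x
  refine step 73751 (by norm_num) (by omega) fun _ => ?_
  refine step 44257 (by norm_num) (by omega) fun _ => ?_
  refine step 26557 (by norm_num) (by omega) fun _ => ?_
  refine step 15937 (by norm_num) (by omega) fun _ => ?_
  refine step 9587 (by norm_num) (by omega) fun _ => ?_
  refine step 5779 (by norm_num) (by omega) fun _ => ?_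
  refine step 3469 (by norm_num) (by omega) fun _ => ?_
  refine step 2083 (by norm_num) (by omega) fun _ => ?_
  refine step 1259 (by norm_num) (by omega) fun _ => ?_
  refine step 757 (by norm_num) (by omega) fun _ => ?_
  refine step 457 (by norm_num) (by omega) fun _ => ?_
  refine step 277 (by norm_num) (by omega) fun _ => ?_
  refine step 167 (by norm_num) (by omega) fun _ => ?_
  refine step 101 (by norm_num) (by omega) fun _ => ?_
  refine step 61 (by norm_num) (by omega) fun _ => ?_
  refine step 37 (by norm_num) (by omega) fun _ => ?_
  refine step 23 (by norm_num) (by omega) fun _ => ?_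
  refine step 17 (by norm_num) (by omega) fun _ => ?_
  refine step 11 (by norm_num) (by omega) fun _ => ?_
  refine step 7 (by norm_num) (by omega) fun _ => ?_
  refine step 5 (by norm_num) (by omega) fun _ => ?_
  omega

theorem not_exists_sq_prod_four_mul_add_one {n : ℕ} (hn : 1 ≤ n) :
    ¬∃ m, ∏ i ∈ Icc 1 n, (4 * i + 1) = m ^ 2 := by
  rcases lt_or_ge n 4 with hn4 | hn4
  · exact not_exists_sq_prod_four_mul_add_one_of_prime (j := 1) prime_five le_rfl (by omega)
      (mem_Icc.2 ⟨le_rfl, hn⟩) (dvd_refl 5)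
  obtain ⟨p, hp, h3p, h5p⟩ := exists_prime_three_mul_le_lt_five_mul (x := 4 * n + 1) (by omega)
  have hp5 : 5 ≤ p := by
    have := hp.two_le
    have : p ≠ 4 := by rintro rfl; norm_num at hp
    omega
  have hodd : p % 2 = 1 := Nat.odd_iff.1 (hp.odd_of_ne_two (by omega))
  obtain ⟨j, hj⟩ : ∃ j, 4 * j + 1 = p ∨ 4 * j + 1 = 3 * p := by
    rcases Nat.lt_or_ge (p % 4) 2 with h | h
    · exact ⟨p / 4, Or.inl (by omega)⟩
    · exact ⟨3 * p / 4, Or.inr (by omega)⟩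
  refine not_exists_sq_prod_four_mul_add_one_of_prime hp hp5 h5p (j := j)
    (mem_Icc.2 ⟨by omega, by omega⟩) ?_
  rcases hj with h | h
  · exact h ▸ dvd_refl p
  · exact h ▸ dvd_mul_left p 3

theorem prod_Icc_four_mul_sub_three_succ (n : ℕ) :
    ∏ i ∈ Icc 1 (n + 1), (4 * i - 3) = ∏ i ∈ Icc 1 n, (4 * i + 1) := by
  induction n with
  | zero => simp
  | succ k ih =>
    rw [prod_Icc_succ_top (by omega : 1 ≤ k + 1 + 1), ih,
      prod_Icc_succ_top (by omega : 1 ≤ k + 1)]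
    rfl

theorem product_four_i_minus_three_and_plus_one_not_square (n : ℕ) :
    (2 ≤ n → ¬ ∃ m : ℕ, (∏ i ∈ Finset.Icc 1 n, (4 * i - 3)) = m ^ 2) ∧
    (1 ≤ n → ¬ ∃ m : ℕ, (∏ i ∈ Finset.Icc 1 n, (4 * i + 1)) = m ^ 2) := by
  refine ⟨fun hn => ?_, not_exists_sq_prod_four_mul_add_one⟩
  obtain ⟨k, rfl⟩ : ∃ k, n = k + 1 := ⟨n - 1, by omega⟩
  rw [prod_Icc_four_mul_sub_three_succ]
  exact not_exists_sq_prod_four_mul_add_one (by omega)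
end

section
/- Let c ≥ 2, let n ≥ c(c+1)/2 with n ≡ c(c+1)/2 (mod 2), and set x_1 = n + c(c-1)/2 - (c-1)^2 and x_i = 2(c-i)+1 for 2 ≤ i ≤ c. Then X = {x_1, ..., x_c} is a set of c distinct nonnegative integers with x_1 > x_2 > ... > x_c, the associated partition P(X) has size n, all elements of X are odd, and the 2-core of P(X) is γ_c. -/
/-!
The set `X` is `{1, 3, …, 2c - 3}` together with one larger odd number `x₁`. Adjoining to a β-set
an element above all others prepends the part `x₁ - |X|` to its partition, and `{1, 3, …, 2t - 1}`
is a β-set of the staircase `γ_t`; so `P(X) = (m, c - 1, …, 1)` with `m = x₁ - (c - 1)`, and the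
congruence on `n` makes `m - c` even. Removing horizontal dominoes from the first row leads to
`γ_c`, which has no hook of even length.
-/

lemma staircase_length (t : ℕ) : (staircase t).length = t := by simp [staircase]

lemma staircase_succ (t : ℕ) : staircase (t + 1) = (t + 1) :: staircase t := by
  simp [staircase, List.range_succ]

lemma mem_staircase {t x : ℕ} : x ∈ staircase t ↔ 1 ≤ x ∧ x ≤ t := by
  simp only [staircase, List.mem_map, List.mem_reverse, List.mem_range]
  constructor
  · rintro ⟨a, ha, rfl⟩; omega
  · rintro ⟨h1, h2⟩; exact ⟨x - 1, by omega, by omega⟩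

lemma staircase_getD (t k : ℕ) : (staircase t).getD k 0 = t - k := by
  rcases Nat.lt_or_ge k t with h | h
  · rw [List.getD_eq_getElem _ _ (by rwa [staircase_length])]
    simp only [staircase, List.getElem_map, List.getElem_reverse, List.getElem_range, List.length_range]
    omega
  · rw [List.getD_eq_default _ _ (by rwa [staircase_length])]; omega

lemma isPartition_staircase (t : ℕ) : IsPartition (staircase t) := by
  refine ⟨?_, fun x hx => (mem_staircase.1 hx).1⟩
  induction t with
  | zero => simp [staircase]
  | succ t ih =>
    rw [staircase_succ]
    exact List.pairwise_cons.2 ⟨fun b hb => (mem_staircase.1 hb).2.trans t.le_succ, ih⟩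

lemma two_mul_sum_staircase (t : ℕ) : 2 * (staircase t).sum = t * (t + 1) := by
  induction t with
  | zero => rfl
  | succ t ih => rw [staircase_succ, List.sum_cons, Nat.mul_add, ih]; ring

lemma conjPart_staircase (t : ℕ) {j : ℕ} (hj : 1 ≤ j) : conjPart (staircase t) j = t + 1 - j := by
  induction t with
  | zero => simp [conjPart, staircase]; omega
  | succ t ih =>
    rw [staircase_succ]
    unfold conjPart at *
    rw [List.filter_cons]
    by_cases h : j ≤ t + 1
    · rw [if_pos (by simpa using h), List.length_cons, ih]; omega
    · rw [if_neg (by simpa using h), ih]; omega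

lemma staircase_hookLength {t i j : ℕ} (hcell : cellMem (staircase t) i j) :
    hookLength (staircase t) i j = 2 * (t + 1 - i - j) + 1 := by
  obtain ⟨hi, -, hj, hjt⟩ := hcell
  rw [staircase_getD] at hjt
  rw [hookLength, staircase_getD, conjPart_staircase t hj]
  omega

lemma staircase_not_hasHook_of_even (t : ℕ) {e : ℕ} (he : Even e) :
    ¬ HasHook (staircase t) e := by
  rintro ⟨i, j, hcell, rfl⟩
  rw [staircase_hookLength hcell] at he
  exact Nat.not_even_two_mul_add_one _ he

section FirstRow

variable {l : List ℕ} {m : ℕ}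

lemma cellMem_cons_iff {x a b : ℕ} :
    cellMem (x :: l) a b ↔ (a = 1 ∧ 1 ≤ b ∧ b ≤ x) ∨ (2 ≤ a ∧ cellMem l (a - 1) b) := by
  unfold cellMem
  match a with
  | 0 => simp
  | 1 => simp
  | a + 2 =>
    rw [show a + 2 - 1 = a + 1 from rfl, List.getD_cons_succ, List.length_cons, Nat.add_sub_cancel]
    omega

lemma getD_le_of_forall_le (hl : ∀ a ∈ l, a ≤ m) (i : ℕ) : l.getD i 0 ≤ m := by
  rcases Nat.lt_or_ge i l.length with h | h
  · rw [List.getD_eq_getElem _ _ h]; exact hl _ (List.getElem_mem h)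
  · rw [List.getD_eq_default _ _ h]; exact Nat.zero_le _

lemma not_cellMem_cons_of_forall_le (hl : ∀ a ∈ l, a ≤ m) {x a b : ℕ} (ha : 2 ≤ a) (hb : m < b) :
    ¬ cellMem (x :: l) a b := by
  rw [cellMem_cons_iff]
  rintro (⟨rfl, -⟩ | ⟨-, -, -, -, hbl⟩)
  · omega
  · exact absurd (hbl.trans (getD_le_of_forall_le hl _)) (by omega)

lemma isPartition_cons (hl : IsPartition l) (hm : 0 < m) (hle : ∀ a ∈ l, a ≤ m) :
    IsPartition (m :: l) :=
  ⟨List.pairwise_cons.2 ⟨hle, hl.1⟩, List.forall_mem_cons.2 ⟨hm, hl.2⟩⟩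

lemma mem_rimSet_cons_add_two (hl : ∀ a ∈ l, a ≤ m) {a b : ℕ} :
    (a, b) ∈ rimSet ((m + 2) :: l) 1 (m + 1) ↔ a = 1 ∧ (b = m + 1 ∨ b = m + 2) := by
  have hhook : ∀ x y, (x, y) ∈ hookSet ((m + 2) :: l) 1 (m + 1) →
      x = 1 ∧ (y = m + 1 ∨ y = m + 2) := by
    rintro x y (⟨rfl, hcell, hy⟩ | ⟨rfl, hcell, hx⟩)
    · rw [cellMem_cons_iff] at hcell; omega
    · by_cases hx2 : 2 ≤ x
      · exact absurd hcell (not_cellMem_cons_of_forall_le hl hx2 (by omega))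
      · omega
  constructor
  · rintro ⟨x, y, s, hxy, hcell, -, heq⟩
    obtain ⟨rfl, hy⟩ := hhook x y hxy
    obtain ⟨rfl, rfl⟩ := Prod.mk.inj heq
    by_cases hs : s = 0
    · subst hs; omega
    · exact absurd hcell (not_cellMem_cons_of_forall_le hl (by omega) (by omega))
  · rintro ⟨rfl, hb⟩
    refine ⟨1, b, 0, Or.inl ⟨rfl, ?_, by omega⟩, ?_,
      not_cellMem_cons_of_forall_le hl le_rfl (by omega), rfl⟩ <;>
    · rw [cellMem_cons_iff]; omega

lemma hookLength_cons_add_two (hl : ∀ a ∈ l, a ≤ m) :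
    hookLength ((m + 2) :: l) 1 (m + 1) = 2 := by
  have hconj : conjPart ((m + 2) :: l) (m + 1) = 1 := by
    rw [conjPart, List.filter_cons_of_pos (by simp), List.length_cons, Nat.add_eq_right,
      List.length_eq_zero_iff, List.filter_eq_nil_iff]
    intro a ha
    have := hl a ha
    simp only [decide_eq_true_eq]
    omega
  simp [hookLength, hconj]

lemma removesHook_two_cons_add_two (hl : IsPartition l) (hm : 0 < m) (hle : ∀ a ∈ l, a ≤ m) :
    RemovesHook 2 ((m + 2) :: l) (m :: l) := by
  refine ⟨isPartition_cons hl hm hle, 1, m + 1, ?_, hookLength_cons_add_two hle, fun a b => ?_⟩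
  · rw [cellMem_cons_iff]; omega
  · rw [mem_rimSet_cons_add_two hle, cellMem_cons_iff, cellMem_cons_iff]
    grind

lemma reflTransGen_removesHook_two_cons (hl : IsPartition l) (hm : 0 < m)
    (hle : ∀ a ∈ l, a ≤ m) (k : ℕ) :
    Relation.ReflTransGen (RemovesHook 2) ((m + 2 * k) :: l) (m :: l) := by
  induction k with
  | zero => rfl
  | succ k ih =>
    refine Relation.ReflTransGen.head ?_ ih
    rw [Nat.mul_succ, ← Nat.add_assoc]
    exact removesHook_two_cons_add_two hl (by omega) fun a ha => (hle a ha).trans (by omega)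

theorem isECore_two_cons_staircase (t k : ℕ) :
    IsECore 2 ((t + 1 + 2 * k) :: staircase t) (staircase (t + 1)) := by
  refine ⟨isPartition_staircase _, ?_, staircase_not_hasHook_of_even _ even_two⟩
  rw [staircase_succ]
  exact reflTransGen_removesHook_two_cons (isPartition_staircase t) t.succ_pos
    (fun a ha => (mem_staircase.1 ha).2.trans t.le_succ) k

end FirstRow

lemma sort_insert_of_forall_lt {Y : Finset ℕ} {x : ℕ} (hx : ∀ y ∈ Y, y < x) :
    (insert x Y).sort (· ≤ ·) = Y.sort (· ≤ ·) ++ [x] := by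
  have hnodup : (Y.sort (· ≤ ·) ++ [x]).Nodup :=
    (Y.sort_nodup _).append (List.nodup_singleton x)
      (by simpa using fun h => lt_irrefl x (hx x h))
  have hsorted : (Y.sort (· ≤ ·) ++ [x]).Pairwise (· ≤ ·) :=
    List.pairwise_append.2 ⟨Y.pairwise_sort _, List.pairwise_singleton _ _,
      by simpa using fun y hy => (hx y hy).le⟩
  rw [← (List.toFinset_sort _ hnodup).2 hsorted]
  congr 1
  ext; simp

lemma betaList_insert_of_forall_lt {Y : Finset ℕ} {x : ℕ} (hx : ∀ y ∈ Y, y < x) :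
    betaList (insert x Y) = (x - Y.card) :: betaList Y := by
  have hnotMem : x ∉ Y := fun h => lt_irrefl x (hx x h)
  rw [betaList, betaList, sort_insert_of_forall_lt hx, List.reverse_append,
    Finset.card_insert_of_notMem hnotMem, List.reverse_singleton, List.singleton_append, List.mapIdx_cons]
  congr 2
  ext k y
  omega

lemma card_image_odd_range (t : ℕ) : ((Finset.range t).image (fun j => 2 * j + 1)).card = t := by
  rw [Finset.card_image_of_injective _ fun a b h => by simpa using h, Finset.card_range]

lemma lt_of_mem_image_odd_range {t y : ℕ} (hy : y ∈ (Finset.range t).image (fun j => 2 * j + 1)) :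
    y < 2 * t := by
  obtain ⟨j, hj, rfl⟩ := Finset.mem_image.1 hy
  rw [Finset.mem_range] at hj
  omega

lemma betaList_image_odd_range (t : ℕ) :
    betaList ((Finset.range t).image (fun j => 2 * j + 1)) = staircase t := by
  induction t with
  | zero => simp [betaList, staircase]
  | succ t ih =>
    rw [Finset.range_add_one, Finset.image_insert,
      betaList_insert_of_forall_lt fun y hy => by have := lt_of_mem_image_odd_range hy; omega,
      ih, card_image_odd_range, staircase_succ]
    congr 1
    omega

lemma betaPartition_eq_betaList {X : Finset ℕ} (h : IsPartition (betaList X)) :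
    betaPartition X = betaList X :=
  List.filter_eq_self.2 fun a ha => by simpa using (h.2 a ha).ne'

theorem betaSet_construction_case_one (c n : ℕ) (hc : 2 ≤ c)
    (hn : c * (c + 1) / 2 ≤ n) (hmod : n % 2 = (c * (c + 1) / 2) % 2)
    (X : Finset ℕ)
    (hXdef : X = insert (n + c * (c - 1) / 2 - (c - 1) ^ 2)
      ((Finset.range (c - 1)).image (fun j => 2 * j + 1))) :
    X.card = c ∧ (∀ x ∈ X, Odd x) ∧ (betaPartition X).sum = n ∧
      IsECore 2 (betaPartition X) (staircase c) := by
  obtain ⟨t, rfl⟩ : ∃ t, c = t + 1 := ⟨c - 1, by omega⟩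
  rw [Nat.add_sub_cancel] at hXdef
  have hsum := two_mul_sum_staircase t
  obtain ⟨k, hk⟩ : ∃ k, n = (staircase t).sum + (t + 1) + 2 * k := by
    have : (t + 1) * (t + 1 + 1) = 2 * ((staircase t).sum + (t + 1)) := by linarith
    exact ⟨(n - ((staircase t).sum + (t + 1))) / 2, by omega⟩
  have hx₁ : n + (t + 1) * t / 2 - t ^ 2 = (t + 1 + 2 * k) + t := by
    have h₁ : (t + 1) * t = 2 * (staircase t).sum := by linarith
    have h₂ : t ^ 2 + t = 2 * (staircase t).sum := by linarith
    omega
  rw [hx₁] at hXdef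
  have hY : ∀ y ∈ (Finset.range t).image (fun j => 2 * j + 1), y < (t + 1 + 2 * k) + t :=
    fun y hy => (lt_of_mem_image_odd_range hy).trans_le (by omega)
  have hP : betaPartition X = (t + 1 + 2 * k) :: staircase t := by
    have hβ : betaList X = (t + 1 + 2 * k) :: staircase t := by
      rw [hXdef, betaList_insert_of_forall_lt hY, betaList_image_odd_range,
        card_image_odd_range, Nat.add_sub_cancel]
    rw [betaPartition_eq_betaList, hβ]
    exact hβ ▸ isPartition_cons (isPartition_staircase t) (by omega)
      fun a ha => (mem_staircase.1 ha).2.trans (by omega)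
  refine ⟨?_, ?_, by rw [hP, List.sum_cons, hk]; ring, hP ▸ isECore_two_cons_staircase t k⟩
  · rw [hXdef, Finset.card_insert_of_notMem fun h => lt_irrefl _ (hY _ h), card_image_odd_range]
  · intro x hx
    rw [hXdef, Finset.mem_insert, Finset.mem_image] at hx
    rcases hx with rfl | ⟨j, -, rfl⟩
    · exact ⟨t + k, by ring⟩
    · exact odd_two_mul_add_one j
end
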